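/- Let 0 < α < β < ∞ and let b̄ : ℝ → ℝ be continuous, nonnegative, with b̄(a) = 0 for a ∉ [α,β], and suppose the Lotka growth rate r = ∫_α^β b̄(c) dc equals 1. Let B : [0,∞) → ℝ satisfy B(t) = ∫_α^β b̄(c)·B(t−c) dc for all t ≥ β, and suppose c₁ ≤ B(s) ≤ c₂ for all s ∈ [0,β]. Then c₁ ≤ B(t) ≤ c₂ for all t ≥ 0; in particular B is bounded on [0,∞), and hence n(a,t) = π(a)·B(t−a) remains bounded as t → ∞ for every a ∈ [0,β]. -/
import Mathlib


open MeasureTheory Real Set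

/-- Theorem 3.5 a: if the Lotka growth rate `r = ∫_α^β b̄` equals
`1` and `c₁ ≤ B ≤ c₂` on `[0,β]`, then the solution of the homogeneous renewal
equation satisfies `c₁ ≤ B(t) ≤ c₂` for all `t ≥ 0`; in particular `B` is
bounded on `[0,∞)` and, for every age `a ∈ [0,β]`,
`n(a,t) = π(a)·B(t−a)` remains bounded as `t → ∞`. -/
theorem renewal_bounded_when_critical
    (α β : ℝ) (hα : 0 < α) (hαβ : α < β)
    (bbar : ℝ → ℝ) (hbc : Continuous bbar) (hb0 : ∀ a, 0 ≤ bbar a)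
    (hbsupp : ∀ a, a ∉ Set.Icc α β → bbar a = 0)
    (hr : (∫ c in α..β, bbar c) = 1)
    (μ : ℝ → ℝ) (hμc : Continuous μ) (hμ0 : ∀ x, 0 ≤ μ x)
    (pi : ℝ → ℝ) (hpi : ∀ a, pi a = Real.exp (-(∫ s in (0:ℝ)..a, μ s)))
    (B : ℝ → ℝ) (hBcont : ContinuousOn B (Set.Ici 0))
    (hB : ∀ t : ℝ, β ≤ t → B t = ∫ c in α..β, bbar c * B (t - c))
    (c₁ c₂ : ℝ) (hbound : ∀ s ∈ Set.Icc (0:ℝ) β, c₁ ≤ B s ∧ B s ≤ c₂) :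
    (∀ t : ℝ, 0 ≤ t → c₁ ≤ B t ∧ B t ≤ c₂) ∧
    (∃ M : ℝ, ∀ t : ℝ, 0 ≤ t → |B t| ≤ M) ∧
    (∀ a ∈ Set.Icc (0:ℝ) β, ∃ M : ℝ, ∀ t : ℝ, a ≤ t →
      |pi a * B (t - a)| ≤ M) := by
  have hab : α ≤ β := hαβ.le
  have key : ∀ n : ℕ, ∀ t : ℝ, 0 ≤ t → t ≤ β + n * α → c₁ ≤ B t ∧ B t ≤ c₂ := by
    intro n
    induction n with
    | zero =>
      intro t ht htn
      exact hbound t ⟨ht, by push_cast at htn; linarith⟩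
    | succ n ih =>
      intro t ht htn
      by_cases hcase : t ≤ β + n * α
      · exact ih t ht hcase
      · push_neg at hcase
        have hna : (0:ℝ) ≤ (n : ℝ) * α := mul_nonneg n.cast_nonneg hα.le
        have hβt : β ≤ t := by linarith
        have hmem : ∀ c ∈ Set.Icc α β, 0 ≤ t - c ∧ t - c ≤ β + n * α := by
          intro c hc
          have htn' : t ≤ β + ((n : ℝ) + 1) * α := by push_cast at htn; linarith
          exact ⟨by linarith [hc.2], by linarith [hc.1]⟩
        have hcont : ContinuousOn (fun c => bbar c * B (t - c)) (Set.uIcc α β) := by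
          rw [Set.uIcc_of_le hab]
          apply hbc.continuousOn.mul
          apply hBcont.comp (Continuous.continuousOn (by continuity))
          intro c hc
          exact (hmem c hc).1
        have hint : IntervalIntegrable (fun c => bbar c * B (t - c)) volume α β :=
          hcont.intervalIntegrable
        have hi1 : IntervalIntegrable (fun c => bbar c * c₁) volume α β :=
          (hbc.mul continuous_const).intervalIntegrable _ _
        have hi2 : IntervalIntegrable (fun c => bbar c * c₂) volume α β :=
          (hbc.mul continuous_const).intervalIntegrable _ _
        have hBt := hB t hβt
        constructor
        · rw [hBt]
          have hm := intervalIntegral.integral_mono_on hab hi1 hint (fun c hc => by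
            have h := ih (t - c) (hmem c hc).1 (hmem c hc).2
            exact mul_le_mul_of_nonneg_left h.1 (hb0 c))
          calc c₁ = ∫ c in α..β, bbar c * c₁ := by
                rw [intervalIntegral.integral_mul_const, hr, one_mul]
            _ ≤ _ := hm
        · rw [hBt]
          have hm := intervalIntegral.integral_mono_on hab hint hi2 (fun c hc => by
            have h := ih (t - c) (hmem c hc).1 (hmem c hc).2
            exact mul_le_mul_of_nonneg_left h.2 (hb0 c))
          calc (∫ c in α..β, bbar c * B (t - c)) ≤ ∫ c in α..β, bbar c * c₂ := hm
            _ = c₂ := by rw [intervalIntegral.integral_mul_const, hr, one_mul]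
  have main : ∀ t : ℝ, 0 ≤ t → c₁ ≤ B t ∧ B t ≤ c₂ := by
    intro t ht
    obtain ⟨n, hn⟩ := exists_nat_ge ((t - β) / α)
    refine key n t ht ?_
    have := (div_le_iff₀ hα).mp hn
    linarith
  have habs : ∀ t : ℝ, 0 ≤ t → |B t| ≤ max |c₁| |c₂| := by
    intro t ht
    obtain ⟨h1, h2⟩ := main t ht
    rw [abs_le]
    constructor
    · have h := le_max_left |c₁| |c₂|
      have := neg_abs_le c₁
      linarith
    · have h := le_max_right |c₁| |c₂|
      have := le_abs_self c₂
      linarith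
  refine ⟨main, ⟨max |c₁| |c₂|, habs⟩, ?_⟩
  intro a ha
  refine ⟨|pi a| * max |c₁| |c₂|, fun t hta => ?_⟩
  rw [abs_mul]
  exact mul_le_mul_of_nonneg_left (habs _ (by linarith)) (abs_nonneg _)
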